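/- Let H ∈ (0, 1/2). Then the integral J_H = ∫₀^∞ y^{1/2−3H}/(y^{1−2H}+1)² dy is finite and strictly positive, and lim_{ε→0⁺} ε^{3/2} · Σ_{n=1}^∞ n^{H−3/2}/(ε + n^{2H−1})² = J_H. -/

import Mathlib

/-!
Put `α = 1 - 2H` and `h = ε ^ (1/α)`, so that `ε = h ^ α`. A direct computation turns the `n`-th
term of `ε ^ (3/2) ∑ n ^ (H - 3/2) / (ε + n ^ (2H - 1))²` into `h · f (n h)`, where `f` is the
integrand of `J_H`: the scaled series is the right Riemann sum of `f` with mesh `h → 0⁺`.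
That Riemann sum is the integral over `(0, ∞)` of the step function `y ↦ f (⌈y / h⌉ h)`, which
tends to `f` pointwise by continuity. Since `f y ≤ min (y ^ (1/2 - 3H), y ^ (H - 3/2))` with
`1/2 - 3H > -1` and `H - 3/2 < -1`, the step functions are dominated by one integrable function,
and dominated convergence gives the limit `J_H`.
-/

open MeasureTheory Real Set Filter Topology

section RiemannSum

variable {E : Type*} [NormedAddCommGroup E] [NormedSpace ℝ E] [CompleteSpace E]

lemma natCeil_eq_succ_iff {t : ℝ} {n : ℕ} : ⌈t⌉₊ = n + 1 ↔ t ∈ Ioc (n : ℝ) (n + 1) := by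
  rw [Nat.ceil_eq_iff n.succ_ne_zero]
  simp

lemma Ioi_zero_eq_iUnion_Ioc_natCast : Ioi (0 : ℝ) = ⋃ n : ℕ, Ioc (n : ℝ) (n + 1) := by
  ext t
  simp only [mem_Ioi, mem_iUnion, ← natCeil_eq_succ_iff]
  constructor
  · intro ht
    exact ⟨⌈t⌉₊ - 1, (Nat.succ_pred_eq_of_pos (Nat.ceil_pos.2 ht)).symm⟩
  · rintro ⟨n, hn⟩
    exact Nat.ceil_pos.1 (hn ▸ n.succ_pos)

lemma integral_Ioi_comp_natCeil (φ : ℕ → E)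
    (hφ : IntegrableOn (fun t : ℝ => φ ⌈t⌉₊) (Ioi 0)) :
    ∫ t in Ioi (0 : ℝ), φ ⌈t⌉₊ = ∑' n : ℕ+, φ n := by
  have hdisj : Pairwise (Function.onFun Disjoint fun n : ℕ => Ioc (n : ℝ) (n + 1)) := fun m n hmn =>
    Set.disjoint_left.2 fun t htm htn => hmn <| Nat.succ_injective <|
      (natCeil_eq_succ_iff.2 htm).symm.trans (natCeil_eq_succ_iff.2 htn)
  rw [Ioi_zero_eq_iUnion_Ioc_natCast] at hφ ⊢
  rw [integral_iUnion (fun _ => measurableSet_Ioc) hdisj hφ, tsum_pnat_eq_tsum_succ]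
  refine tsum_congr fun n => ?_
  rw [setIntegral_congr_fun measurableSet_Ioc fun t ht => congrArg φ (natCeil_eq_succ_iff.2 ht),
    setIntegral_const]
  simp

lemma natCeil_div_mul_mem_Icc {y h : ℝ} (hy : 0 ≤ y) (hh : 0 < h) :
    (⌈y / h⌉₊ : ℝ) * h ∈ Icc y (y + h) := by
  refine ⟨(div_le_iff₀ hh).1 (Nat.le_ceil _), ?_⟩
  have := mul_lt_mul_of_pos_right (Nat.ceil_lt_add_one (div_nonneg hy hh.le)) hh
  rw [add_mul, div_mul_cancel₀ _ hh.ne', one_mul] at this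
  exact this.le

lemma tendsto_natCeil_div_mul {y : ℝ} (hy : 0 ≤ y) :
    Tendsto (fun h : ℝ => (⌈y / h⌉₊ : ℝ) * h) (𝓝[>] 0) (𝓝 y) := by
  have hupper : Tendsto (fun h : ℝ => y + h) (𝓝[>] 0) (𝓝 y) := by
    simpa using (tendsto_const_nhds.add tendsto_id : Tendsto (fun h : ℝ => y + h) (𝓝 0)
      (𝓝 (y + 0))).mono_left nhdsWithin_le_nhds
  refine tendsto_of_tendsto_of_tendsto_of_le_of_le' tendsto_const_nhds hupper ?_ ?_ <;>
    filter_upwards [self_mem_nhdsWithin] with h hh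
  exacts [(natCeil_div_mul_mem_Icc hy hh).1, (natCeil_div_mul_mem_Icc hy hh).2]

lemma integral_Ioi_comp_natCeil_div_mul {f : ℝ → E} {h : ℝ} (hh : 0 < h)
    (hf : IntegrableOn (fun y : ℝ => f (⌈y / h⌉₊ * h)) (Ioi 0)) :
    ∫ y in Ioi (0 : ℝ), f (⌈y / h⌉₊ * h) = h • ∑' n : ℕ+, f (n * h) := by
  simp only [div_eq_mul_inv] at hf ⊢
  rw [integrableOn_Ioi_comp_mul_right_iff (fun t : ℝ => f (⌈t⌉₊ * h)) 0 (inv_pos.2 hh),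
    zero_mul] at hf
  rw [integral_comp_mul_right_Ioi (fun t : ℝ => f (⌈t⌉₊ * h)) 0 (inv_pos.2 hh), inv_inv,
    zero_mul, integral_Ioi_comp_natCeil (fun n : ℕ => f (n * h)) hf]

theorem tendsto_smul_tsum_pnat_nhdsGT_zero {f : ℝ → E} {g : ℝ → ℝ} (hf : ContinuousOn f (Ioi 0))
    (hg : IntegrableOn g (Ioi 0)) (hfg : ∀ ⦃y z⦄, 0 < y → y ≤ z → z ≤ y + 1 → ‖f z‖ ≤ g y) :
    Tendsto (fun h : ℝ => h • ∑' n : ℕ+, f (n * h)) (𝓝[>] 0) (𝓝 (∫ y in Ioi 0, f y)) := by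
  set F : ℝ → ℝ → E := fun h y => f (⌈y / h⌉₊ * h)
  have hF_meas (h : ℝ) : AEStronglyMeasurable (F h) (volume.restrict (Ioi 0)) :=
    ((StronglyMeasurable.of_discrete (f := fun n : ℕ => f (n * h))).comp_measurable
      (Nat.measurable_ceil.comp (measurable_div_const h))).aestronglyMeasurable
  have hF_bound : ∀ᶠ h in 𝓝[>] (0 : ℝ), ∀ᵐ y ∂(volume.restrict (Ioi 0)), ‖F h y‖ ≤ g y := by
    filter_upwards [Ioo_mem_nhdsGT one_pos] with h hh
    refine (ae_restrict_iff' measurableSet_Ioi).2 (ae_of_all _ fun y (hy : 0 < y) => ?_)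
    obtain ⟨hyz, hzy⟩ := natCeil_div_mul_mem_Icc hy.le hh.1
    exact hfg hy hyz (by linarith [hh.2])
  have hF_lim : ∀ᵐ y ∂(volume.restrict (Ioi 0)), Tendsto (F · y) (𝓝[>] 0) (𝓝 (f y)) :=
    (ae_restrict_iff' measurableSet_Ioi).2 <| ae_of_all _ fun y (hy : 0 < y) =>
      (hf.continuousAt (Ioi_mem_nhds hy)).tendsto.comp (tendsto_natCeil_div_mul hy.le)
  refine (tendsto_integral_filter_of_dominated_convergence g (.of_forall hF_meas) hF_bound hg
    hF_lim).congr' ?_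
  filter_upwards [hF_bound, self_mem_nhdsWithin] with h hbound (hh : 0 < h)
  exact integral_Ioi_comp_natCeil_div_mul hh (hg.mono' (hF_meas h) hbound)

end RiemannSum

section RpowEnvelope

noncomputable def rpowEnvelope (a b : ℝ) : ℝ → ℝ :=
  (Ioc 0 1).indicator (fun y => y ^ a + 2 ^ a) + (Ioi 1).indicator (fun y => y ^ b)

lemma integrable_rpowEnvelope {a b : ℝ} (ha : -1 < a) (hb : b < -1) :
    Integrable (rpowEnvelope a b) := by
  refine .add ?_ ?_
  · rw [integrable_indicator_iff measurableSet_Ioc]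
    refine .add ?_ (integrableOn_const (by simp))
    exact ((intervalIntegral.integrableOn_Ioo_rpow_iff one_pos).2 ha).congr_set_ae
      Ioo_ae_eq_Ioc.symm
  · rw [integrable_indicator_iff measurableSet_Ioi]
    exact (integrableOn_Ioi_rpow_iff one_pos).2 hb

lemma norm_le_rpowEnvelope {E : Type*} [Norm E] {f : ℝ → E} {a b : ℝ} (hb : b ≤ 0)
    (hfa : ∀ z, 0 < z → ‖f z‖ ≤ z ^ a) (hfb : ∀ z, 0 < z → ‖f z‖ ≤ z ^ b)
    {y z : ℝ} (hy : 0 < y) (hyz : y ≤ z) (hzy : z ≤ y + 1) :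
    ‖f z‖ ≤ rpowEnvelope a b y := by
  have hz : 0 < z := hy.trans_le hyz
  rcases le_or_gt y 1 with hy1 | hy1
  · have hmem : y ∈ Ioc (0 : ℝ) 1 := ⟨hy, hy1⟩
    have hnmem : y ∉ Ioi (1 : ℝ) := not_lt.2 hy1
    simp only [rpowEnvelope, Pi.add_apply, indicator_of_mem hmem, indicator_of_notMem hnmem,
      add_zero]
    refine (hfa z hz).trans ?_
    rcases le_total a 0 with ha | ha
    · linarith [rpow_le_rpow_of_nonpos hy hyz ha, rpow_nonneg zero_le_two a]
    · linarith [rpow_le_rpow hz.le (by linarith : z ≤ 2) ha, rpow_nonneg hy.le a]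
  · have hnmem : y ∉ Ioc (0 : ℝ) 1 := fun h => (not_le.2 hy1) h.2
    simp only [rpowEnvelope, Pi.add_apply, indicator_of_mem (show y ∈ Ioi (1 : ℝ) from hy1),
      indicator_of_notMem hnmem, zero_add]
    exact (hfb z hz).trans (rpow_le_rpow_of_nonpos hy hyz hb)

end RpowEnvelope

lemma setIntegral_pos_of_forall_pos {X : Type*} [MeasurableSpace X] {μ : Measure X} {f : X → ℝ}
    {s : Set X} (hs : MeasurableSet s) (hμs : μ s ≠ 0) (hf : IntegrableOn f s μ)
    (hpos : ∀ x ∈ s, 0 < f x) : 0 < ∫ x in s, f x ∂μ := by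
  have hnonneg : 0 ≤ᵐ[μ.restrict s] f :=
    (ae_restrict_iff' hs).2 (ae_of_all _ fun x hx => (hpos x hx).le)
  rw [setIntegral_pos_iff_support_of_nonneg_ae hnonneg hf,
    (inter_eq_right.2 fun x hx => (hpos x hx).ne' : Function.support f ∩ s = s)]
  exact pos_iff_ne_zero.2 hμs

lemma tendsto_rpow_nhdsGT_zero {p : ℝ} (hp : 0 < p) :
    Tendsto (fun x : ℝ => x ^ p) (𝓝[>] 0) (𝓝[>] 0) := by
  refine tendsto_nhdsWithin_iff.2 ⟨?_, ?_⟩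
  · have := (continuousAt_rpow_const 0 p (Or.inr hp.le)).tendsto
    rw [zero_rpow hp.ne'] at this
    exact this.mono_left nhdsWithin_le_nhds
  · filter_upwards [self_mem_nhdsWithin] with x (hx : 0 < x)
    exact rpow_pos_of_pos hx p

section JIntegrand

variable (H : ℝ)

noncomputable def jIntegrand (y : ℝ) : ℝ := y ^ (1/2 - 3*H) / (y ^ (1 - 2*H) + 1) ^ 2

variable {H}

lemma jIntegrand_pos {y : ℝ} (hy : 0 < y) : 0 < jIntegrand H y := by
  have := rpow_pos_of_pos hy (1 - 2*H)
  unfold jIntegrand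
  positivity

lemma jIntegrand_le_rpow_left {y : ℝ} (hy : 0 < y) : jIntegrand H y ≤ y ^ (1/2 - 3*H) := by
  have := rpow_pos_of_pos hy (1 - 2*H)
  exact div_le_self (rpow_nonneg hy.le _) (by nlinarith)

lemma jIntegrand_le_rpow_right {y : ℝ} (hy : 0 < y) : jIntegrand H y ≤ y ^ (H - 3/2) :=
  have hA := rpow_pos_of_pos hy (1 - 2*H)
  calc jIntegrand H y ≤ y ^ (1/2 - 3*H) / (y ^ (1 - 2*H)) ^ 2 :=
        div_le_div_of_nonneg_left (rpow_nonneg hy.le _) (by positivity) (by nlinarith)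
    _ = y ^ (H - 3/2) := by
        rw [← rpow_natCast, ← rpow_mul hy.le, ← rpow_sub hy]
        ring_nf

lemma continuousOn_jIntegrand : ContinuousOn (jIntegrand H) (Ioi 0) := fun y (hy : 0 < y) =>
  have hden : (y ^ (1 - 2*H) + 1) ^ 2 ≠ 0 := by
    have := rpow_pos_of_pos hy (1 - 2*H)
    positivity
  ((continuousAt_rpow_const y _ (.inl hy.ne')).div
    (((continuousAt_rpow_const y _ (.inl hy.ne')).add continuousAt_const).pow 2)
    hden).continuousWithinAt

lemma norm_jIntegrand_le_rpowEnvelope (hH : H < 1/2) {y z : ℝ} (hy : 0 < y) (hyz : y ≤ z)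
    (hzy : z ≤ y + 1) : ‖jIntegrand H z‖ ≤ rpowEnvelope (1/2 - 3*H) (H - 3/2) y := by
  refine norm_le_rpowEnvelope (by linarith) (fun z hz => ?_) (fun z hz => ?_) hy hyz hzy <;>
    rw [norm_of_nonneg (jIntegrand_pos hz).le]
  exacts [jIntegrand_le_rpow_left hz, jIntegrand_le_rpow_right hz]

lemma mul_jIntegrand_mul_eq {h x : ℝ} (hh : 0 < h) (hx : 0 < x) :
    h * jIntegrand H (x * h) =
      (h ^ (1 - 2*H)) ^ (3/2 : ℝ) * (x ^ (H - 3/2) / (h ^ (1 - 2*H) + x ^ (2*H - 1)) ^ 2) := by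
  have hA := rpow_pos_of_pos hx (1 - 2*H)
  have hB := rpow_pos_of_pos hh (1 - 2*H)
  have hx_inv : x ^ (2*H - 1) = (x ^ (1 - 2*H))⁻¹ := by
    rw [← rpow_neg hx.le]; ring_nf
  have hx_num : x ^ (H - 3/2) = x ^ (1/2 - 3*H) / (x ^ (1 - 2*H)) ^ 2 := by
    rw [← rpow_natCast, ← rpow_mul hx.le, ← rpow_sub hx]; ring_nf
  have hh_pow : (h ^ (1 - 2*H)) ^ (3/2 : ℝ) = h ^ (1/2 - 3*H) * h := by
    rw [← rpow_mul hh.le, ← rpow_add_one hh.ne']; ring_nf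
  rw [jIntegrand, mul_rpow hx.le hh.le, mul_rpow hx.le hh.le, hx_inv, hx_num, hh_pow]
  field_simp

end JIntegrand

/-- for `H ∈ (0,1/2)`, `J_H = ∫₀^∞ y^{1/2−3H}/(y^{1−2H}+1)² dy` is finite and
positive, and `ε^{3/2} · Σ_{n≥1} n^{H−3/2}/(ε + n^{2H−1})² → J_H` as `ε → 0⁺`. -/
theorem stmt_7 (H : ℝ) (hH : H ∈ Set.Ioo (0 : ℝ) (1/2)) :
    IntegrableOn (fun y : ℝ => y ^ (1/2 - 3*H) / (y ^ (1 - 2*H) + 1) ^ 2) (Set.Ioi 0)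
    ∧ 0 < ∫ y in Set.Ioi (0:ℝ), y ^ (1/2 - 3*H) / (y ^ (1 - 2*H) + 1) ^ 2
    ∧ Filter.Tendsto
        (fun ε : ℝ => ε ^ (3/2 : ℝ) *
          ∑' n : ℕ+, (n : ℝ) ^ (H - 3/2) / (ε + (n : ℝ) ^ (2*H - 1)) ^ 2)
        (nhdsWithin 0 (Set.Ioi 0))
        (nhds (∫ y in Set.Ioi (0:ℝ), y ^ (1/2 - 3*H) / (y ^ (1 - 2*H) + 1) ^ 2)) := by
  obtain ⟨hH0, hH1⟩ := hH
  have hα : 0 < 1 - 2*H := by linarith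
  have hg : IntegrableOn (rpowEnvelope (1/2 - 3*H) (H - 3/2)) (Ioi 0) :=
    (integrable_rpowEnvelope (by linarith) (by linarith)).integrableOn
  have hint : IntegrableOn (jIntegrand H) (Ioi 0) :=
    hg.mono' (continuousOn_jIntegrand.aestronglyMeasurable measurableSet_Ioi) <|
      (ae_restrict_iff' measurableSet_Ioi).2 <| ae_of_all _ fun y (hy : 0 < y) =>
        norm_jIntegrand_le_rpowEnvelope hH1 hy le_rfl (by linarith)
  refine ⟨hint, setIntegral_pos_of_forall_pos measurableSet_Ioi (by simp) hint
    fun y hy => jIntegrand_pos hy, ?_⟩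
  refine ((tendsto_smul_tsum_pnat_nhdsGT_zero continuousOn_jIntegrand hg
    fun y z => norm_jIntegrand_le_rpowEnvelope hH1).comp
      (tendsto_rpow_nhdsGT_zero (inv_pos.2 hα))).congr' ?_
  filter_upwards [self_mem_nhdsWithin] with ε (hε : 0 < ε)
  have hh := rpow_pos_of_pos hε (1 - 2*H)⁻¹
  simp only [Function.comp_apply, smul_eq_mul, ← tsum_mul_left,
    mul_jIntegrand_mul_eq hh (Nat.cast_pos.2 (PNat.pos _)), rpow_inv_rpow hε.le hα.ne']
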